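/- There is an absolute constant c > 0 such that the following holds. Let A ∈ ℝ^{n×n} with largest singular value σ₁(A) > 0, and let u₁ be a unit eigenvector of AAᵀ with eigenvalue σ₁(A)². Let y ∈ ℝⁿ be a unit vector with |⟨y, u₁⟩| ≥ 1/√n. Then for every ε ∈ (0,1) and every integer t ≥ c·log(n/ε)/ε, the vector (AAᵀ)ᵗy is nonzero, and the unit vector z = (AAᵀ)ᵗy / ‖(AAᵀ)ᵗy‖₂ satisfies ‖Aᵀz‖₂ ≥ (1 − ε)·σ₁(A). -/

import Mathlib

open Matrix BigOperators

/-- The spectral (operator) norm of a real square matrix. -/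
noncomputable def specNorm {m : ℕ} (M : Matrix (Fin m) (Fin m) ℝ) : ℝ :=
  ‖LinearMap.toContinuousLinearMap (Matrix.toEuclideanLin M)‖

/-- The `n × n` all-ones matrix. -/
def allOnes (m : ℕ) : Matrix (Fin m) (Fin m) ℝ := Matrix.of fun _ _ => 1

/-- Euclidean norm of a vector in `ℝⁿ`. -/
noncomputable def vnorm {m : ℕ} (x : Fin m → ℝ) : ℝ := Real.sqrt (∑ i, (x i) ^ 2)

/-- The (unsorted) singular values of a real square matrix: square roots of the
eigenvalues of `Aᵀ A`. -/
noncomputable def svRaw {m : ℕ} (A : Matrix (Fin m) (Fin m) ℝ) : Fin m → ℝ :=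
  fun j => Real.sqrt ((show (Aᵀ * A).IsHermitian from
    by
    simpa using Matrix.isHermitian_conjTranspose_mul_self A).eigenvalues j)

/-- `sval A i` is the `i`-th largest singular value of `A` (1-based indexing);
it is `0` for `i = 0` and for `i > m`. -/
noncomputable def sval {m : ℕ} (A : Matrix (Fin m) (Fin m) ℝ) (i : ℕ) : ℝ :=
  if h : 1 ≤ i ∧ i ≤ m then (svRaw A ∘ Tuple.sort (svRaw A)) ⟨m - i, by omega⟩ else 0

/-- The nuclear (Schatten-1) norm of a real square matrix: the sum of its singular values. -/
noncomputable def nuclearNorm {m : ℕ} (A : Matrix (Fin m) (Fin m) ℝ) : ℝ :=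
  ∑ j, svRaw A j

/-- The smallest eigenvalue of a symmetric real matrix, via the Rayleigh quotient. -/
noncomputable def lamMin {m : ℕ} (A : Matrix (Fin m) (Fin m) ℝ) : ℝ :=
  sInf {r : ℝ | ∃ x : Fin m → ℝ, vnorm x = 1 ∧ r = x ⬝ᵥ (A *ᵥ x)}

/-!
With `B = A Aᵀ` and `q s = ‖Bˢ y‖²`, symmetry of `B` gives `q (s+1) = ⟨Bˢ y, B^(s+2) y⟩`, so by
Cauchy–Schwarz `q` is log-convex and the ratios `q (s+1) / q s` increase. Hence
`q (t+1) ≤ q 0 · (q (t+1) / q t)^(t+1)`, while the component along `u₁` grows like `σ₁²` per step: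
`q (t+1) ≥ σ₁^(4(t+1)) / n`. For `t ≥ log (n/ε) / ε` we have `n (1-ε)^(2(t+1)) ≤ 1`, and therefore
the last ratio is at least `(1-ε)² σ₁⁴`. Finally `‖A Aᵀ w‖ ≤ σ₁ ‖Aᵀ w‖` turns this into
`‖Aᵀ z‖² ≥ q (t+1) / (σ₁² q t) ≥ (1-ε)² σ₁²`. The constant `c = 1` works.
-/

theorem mul_le_of_pow_succ_mul_le_of_sq_le_mul {q : ℕ → ℝ} (hq : ∀ s, 0 < q s)
    (hconv : ∀ s, q (s + 1) ^ 2 ≤ q s * q (s + 2)) {a : ℝ} (ha : 0 ≤ a) {t : ℕ}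
    (hgrowth : a ^ (t + 1) * q 0 ≤ q (t + 1)) : a * q t ≤ q (t + 1) := by
  set r : ℕ → ℝ := fun s => q (s + 1) / q s
  have hr_pos : ∀ s, 0 < r s := fun s => div_pos (hq _) (hq _)
  have hr_mono : Monotone r := monotone_nat_of_le_succ fun s => by
    simp only [r]
    rw [div_le_div_iff₀ (hq s) (hq (s + 1))]
    nlinarith [hconv s]
  have hprod : ∀ k, q k = q 0 * ∏ s ∈ Finset.range k, r s := by
    intro k
    induction k with
    | zero => simp
    | succ k ih => rw [Finset.prod_range_succ, ← mul_assoc, ← ih, mul_div_cancel₀ _ (hq k).ne']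
  have hprod_le : ∏ s ∈ Finset.range (t + 1), r s ≤ r t ^ (t + 1) := by
    simpa using Finset.prod_le_prod (fun s _ => (hr_pos s).le)
      (fun s hs => hr_mono (Nat.le_of_lt_succ (Finset.mem_range.mp hs)))
  have hpow : a ^ (t + 1) ≤ r t ^ (t + 1) := by
    refine le_of_mul_le_mul_right ?_ (hq 0)
    calc a ^ (t + 1) * q 0 ≤ q 0 * ∏ s ∈ Finset.range (t + 1), r s := hprod (t + 1) ▸ hgrowth
      _ ≤ r t ^ (t + 1) * q 0 := by
        rw [mul_comm]
        exact mul_le_mul_of_nonneg_right hprod_le (hq 0).le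
  have ha_le : a ≤ r t := (pow_le_pow_iff_left₀ ha (hr_pos t).le (Nat.succ_ne_zero t)).mp hpow
  exact (le_div_iff₀ (hq t)).mp ha_le

theorem one_sub_pow_le_inv_of_log_div_le {x ε : ℝ} (hx : 0 < x) (hε₀ : 0 < ε) (hε₁ : ε ≤ 1)
    {t : ℕ} (ht : Real.log (x / ε) / ε ≤ t) : (1 - ε) ^ t ≤ x⁻¹ := by
  have hlog : Real.log x ≤ ε * t := by
    have hx_le : x ≤ x / ε := le_div_self hx.le hε₀ hε₁
    have := (div_le_iff₀ hε₀).mp ht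
    linarith [Real.log_le_log hx hx_le]
  calc (1 - ε) ^ t ≤ Real.exp (-ε) ^ t :=
        pow_le_pow_left₀ (sub_nonneg.2 hε₁) (by linarith [Real.add_one_le_exp (-ε)]) t
    _ = Real.exp (-(ε * t)) := by rw [← Real.exp_nat_mul]; ring_nf
    _ ≤ Real.exp (-Real.log x) := Real.exp_le_exp.2 (by linarith)
    _ = x⁻¹ := by rw [Real.exp_neg, Real.exp_log hx]

theorem sq_dotProduct_le {ι : Type*} [Fintype ι] (v w : ι → ℝ) :
    (v ⬝ᵥ w) ^ 2 ≤ (v ⬝ᵥ v) * (w ⬝ᵥ w) := by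
  simpa only [dotProduct, pow_two] using Finset.sum_mul_sq_le_sq_mul_sq Finset.univ v w

open scoped MatrixOrder in
theorem Matrix.IsHermitian.dotProduct_mulVec_le {ι : Type*} [Fintype ι] [DecidableEq ι]
    {M : Matrix ι ι ℝ} (hM : M.IsHermitian) {b : ℝ} (hb : ∀ i, hM.eigenvalues i ≤ b)
    (x : ι → ℝ) : x ⬝ᵥ (M *ᵥ x) ≤ b * (x ⬝ᵥ x) := by
  have hle : M ≤ algebraMap ℝ _ b := le_algebraMap_of_spectrum_le (by
    rw [hM.spectrum_real_eq_range_eigenvalues]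
    rintro _ ⟨i, rfl⟩
    exact hb i)
  simpa [sub_mulVec, Algebra.algebraMap_eq_smul_one, smul_mulVec, dotProduct_sub]
    using (Matrix.le_iff.mp hle).dotProduct_mulVec_nonneg x

theorem Matrix.IsSymm.dotProduct_mulVec_comm {ι R : Type*} [Fintype ι] [CommSemiring R]
    {B : Matrix ι ι R} (hB : B.IsSymm) (v w : ι → R) : (B *ᵥ v) ⬝ᵥ w = v ⬝ᵥ (B *ᵥ w) := by
  rw [dotProduct_mulVec, ← vecMul_transpose, hB.eq]

theorem Matrix.pow_succ_mulVec {ι R : Type*} [Fintype ι] [DecidableEq ι] [Semiring R]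
    (B : Matrix ι ι R) (y : ι → R) (s : ℕ) : B ^ (s + 1) *ᵥ y = B *ᵥ (B ^ s *ᵥ y) := by
  rw [pow_succ', mulVec_mulVec]

section PowerIteration

variable {ι : Type*} [Fintype ι] [DecidableEq ι] {B : Matrix ι ι ℝ}

theorem Matrix.IsSymm.pow_mulVec_dotProduct_of_mulVec_eq_smul (hB : B.IsSymm) {u : ι → ℝ}
    {μ : ℝ} (hu : B *ᵥ u = μ • u) (y : ι → ℝ) (s : ℕ) :
    (B ^ s *ᵥ y) ⬝ᵥ u = μ ^ s * (y ⬝ᵥ u) := by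
  induction s with
  | zero => simp
  | succ s ih =>
    rw [pow_succ_mulVec, hB.dotProduct_mulVec_comm, hu, dotProduct_smul, smul_eq_mul, ih, pow_succ]
    ring

theorem Matrix.IsSymm.sq_pow_mul_dotProduct_le (hB : B.IsSymm) {u : ι → ℝ} {μ : ℝ}
    (hu : B *ᵥ u = μ • u) (hu₁ : u ⬝ᵥ u = 1) (y : ι → ℝ) (s : ℕ) :
    (μ ^ s * (y ⬝ᵥ u)) ^ 2 ≤ (B ^ s *ᵥ y) ⬝ᵥ (B ^ s *ᵥ y) := by
  simpa [hB.pow_mulVec_dotProduct_of_mulVec_eq_smul hu, hu₁] using sq_dotProduct_le (B ^ s *ᵥ y) u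

theorem Matrix.IsSymm.sq_dotProduct_pow_succ_mulVec_le (hB : B.IsSymm) (y : ι → ℝ) (s : ℕ) :
    ((B ^ (s + 1) *ᵥ y) ⬝ᵥ (B ^ (s + 1) *ᵥ y)) ^ 2 ≤
      ((B ^ s *ᵥ y) ⬝ᵥ (B ^ s *ᵥ y)) * ((B ^ (s + 2) *ᵥ y) ⬝ᵥ (B ^ (s + 2) *ᵥ y)) := by
  have hmid : (B ^ (s + 1) *ᵥ y) ⬝ᵥ (B ^ (s + 1) *ᵥ y) = (B ^ s *ᵥ y) ⬝ᵥ (B ^ (s + 2) *ᵥ y) := by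
    rw [pow_succ_mulVec B y s, hB.dotProduct_mulVec_comm, ← pow_succ_mulVec, ← pow_succ_mulVec]
  rw [hmid]
  exact sq_dotProduct_le _ _

theorem Matrix.IsSymm.pow_mulVec_ne_zero (hB : B.IsSymm) {u : ι → ℝ} {μ : ℝ}
    (hu : B *ᵥ u = μ • u) (hμ : μ ≠ 0) {y : ι → ℝ} (hyu : y ⬝ᵥ u ≠ 0) (s : ℕ) :
    B ^ s *ᵥ y ≠ 0 := fun h => by
  have := hB.pow_mulVec_dotProduct_of_mulVec_eq_smul hu y s
  simp_all

theorem Matrix.IsSymm.mul_dotProduct_self_pow_mulVec_le (hB : B.IsSymm) {u : ι → ℝ} {μ : ℝ}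
    (hu : B *ᵥ u = μ • u) (hu₁ : u ⬝ᵥ u = 1) (hμ : μ ≠ 0) {y : ι → ℝ} (hy : y ⬝ᵥ y = 1)
    (hyu : y ⬝ᵥ u ≠ 0) {a : ℝ} (ha : 0 ≤ a) {t : ℕ} (hgrowth : a ^ (t + 1) ≤ (y ⬝ᵥ u) ^ 2) :
    a * μ ^ 2 * ((B ^ t *ᵥ y) ⬝ᵥ (B ^ t *ᵥ y)) ≤
      (B ^ (t + 1) *ᵥ y) ⬝ᵥ (B ^ (t + 1) *ᵥ y) := by
  set q : ℕ → ℝ := fun s => (B ^ s *ᵥ y) ⬝ᵥ (B ^ s *ᵥ y)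
  have hq_lower : ∀ s, (μ ^ 2) ^ s * (y ⬝ᵥ u) ^ 2 ≤ q s := fun s => by
    simpa only [mul_pow, ← pow_mul, mul_comm s 2] using hB.sq_pow_mul_dotProduct_le hu hu₁ y s
  have hq_pos : ∀ s, 0 < q s := fun s => (hq_lower s).trans_lt' (by positivity)
  refine mul_le_of_pow_succ_mul_le_of_sq_le_mul hq_pos (hB.sq_dotProduct_pow_succ_mulVec_le y)
    (mul_nonneg ha (sq_nonneg μ)) ?_
  calc (a * μ ^ 2) ^ (t + 1) * q 0 = a ^ (t + 1) * (μ ^ 2) ^ (t + 1) := by simp [q, hy, mul_pow]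
    _ ≤ (μ ^ 2) ^ (t + 1) * (y ⬝ᵥ u) ^ 2 := by rw [mul_comm]; gcongr
    _ ≤ q (t + 1) := hq_lower (t + 1)

end PowerIteration

theorem vnorm_eq_sqrt_dotProduct {m : ℕ} (x : Fin m → ℝ) : vnorm x = √(x ⬝ᵥ x) := by
  simp only [vnorm, dotProduct, pow_two]

theorem dotProduct_self_eq_one_of_vnorm_eq_one {m : ℕ} {x : Fin m → ℝ} (hx : vnorm x = 1) :
    x ⬝ᵥ x = 1 := by
  rw [vnorm_eq_sqrt_dotProduct, Real.sqrt_eq_one] at hx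
  exact hx

theorem vnorm_smul {m : ℕ} (r : ℝ) (x : Fin m → ℝ) : vnorm (r • x) = |r| * vnorm x := by
  rw [vnorm_eq_sqrt_dotProduct, vnorm_eq_sqrt_dotProduct, smul_dotProduct, dotProduct_smul,
    smul_eq_mul, smul_eq_mul, ← mul_assoc, Real.sqrt_mul (mul_self_nonneg r),
    Real.sqrt_mul_self_eq_abs]

theorem le_vnorm_mulVec_inv_smul {m : ℕ} (M : Matrix (Fin m) (Fin m) ℝ) {x : Fin m → ℝ}
    (hx : x ≠ 0) {c : ℝ} (hc : 0 ≤ c) (h : c ^ 2 * (x ⬝ᵥ x) ≤ (M *ᵥ x) ⬝ᵥ (M *ᵥ x)) :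
    c ≤ vnorm (M *ᵥ (vnorm x)⁻¹ • x) := by
  have hpos : 0 < vnorm x := by
    rw [vnorm_eq_sqrt_dotProduct, Real.sqrt_pos]
    simpa using dotProduct_star_self_pos_iff.mpr hx
  rw [mulVec_smul, vnorm_smul, abs_of_pos (inv_pos.2 hpos), inv_mul_eq_div, le_div_iff₀ hpos,
    vnorm_eq_sqrt_dotProduct, vnorm_eq_sqrt_dotProduct, ← Real.sqrt_sq hc,
    ← Real.sqrt_mul (sq_nonneg c)]
  exact Real.sqrt_le_sqrt h

theorem pos_of_sval_one_pos {m : ℕ} {A : Matrix (Fin m) (Fin m) ℝ} (h : 0 < sval A 1) :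
    0 < m := by
  by_contra hm
  simp_all [sval]

theorem eigenvalues_transpose_mul_self_le_sval_one_sq {m : ℕ} (A : Matrix (Fin m) (Fin m) ℝ)
    (hAA : (Aᵀ * A).IsHermitian) (j : Fin m) : hAA.eigenvalues j ≤ sval A 1 ^ 2 := by
  have hm : 1 ≤ m := Fin.pos j
  obtain ⟨i, hi⟩ := (Tuple.sort (svRaw A)).surjective j
  have hsv : svRaw A j ≤ sval A 1 := by
    rw [sval, dif_pos ⟨le_rfl, hm⟩, ← hi]
    exact Tuple.monotone_sort (svRaw A) (Fin.mk_le_mk.mpr (by omega))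
  have hnonneg : 0 ≤ hAA.eigenvalues j := eigenvalues_conjTranspose_mul_self_nonneg A j
  calc hAA.eigenvalues j = svRaw A j ^ 2 := (Real.sq_sqrt hnonneg).symm
    _ ≤ sval A 1 ^ 2 := pow_le_pow_left₀ (Real.sqrt_nonneg _) hsv 2

theorem mulVec_dotProduct_self_le {m : ℕ} (A : Matrix (Fin m) (Fin m) ℝ) (x : Fin m → ℝ) :
    (A *ᵥ x) ⬝ᵥ (A *ᵥ x) ≤ sval A 1 ^ 2 * (x ⬝ᵥ x) := by
  have hAA : (Aᵀ * A).IsHermitian := by simpa using isHermitian_conjTranspose_mul_self A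
  calc (A *ᵥ x) ⬝ᵥ (A *ᵥ x) = x ⬝ᵥ ((Aᵀ * A) *ᵥ x) := by
        rw [← mulVec_mulVec, dotProduct_mulVec x, vecMul_transpose]
    _ ≤ sval A 1 ^ 2 * (x ⬝ᵥ x) :=
        hAA.dotProduct_mulVec_le (eigenvalues_transpose_mul_self_le_sval_one_sq A hAA) x

/-- **Gap-independent convergence of power iteration.** If the unit vector `y` has inner
product at least `1/√n` in magnitude with a top left singular vector `u₁` of `A`, then
for `t ≥ c log(n/ε)/ε`, the normalized vector `z = (AAᵀ)ᵗy / ‖(AAᵀ)ᵗy‖` satisfies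
`‖Aᵀz‖₂ ≥ (1−ε)σ₁(A)`. -/
theorem power_method_convergence :
    ∃ c : ℝ, 0 < c ∧ ∀ (n : ℕ) (A : Matrix (Fin n) (Fin n) ℝ) (u₁ y : Fin n → ℝ)
      (ε : ℝ) (t : ℕ),
      0 < sval A 1 →
      vnorm u₁ = 1 → (A * Aᵀ) *ᵥ u₁ = ((sval A 1) ^ 2) • u₁ →
      vnorm y = 1 → 1 / Real.sqrt n ≤ |y ⬝ᵥ u₁| →
      ε ∈ Set.Ioo (0 : ℝ) 1 → c * Real.log (n / ε) / ε ≤ t →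
      ((A * Aᵀ) ^ t) *ᵥ y ≠ 0 ∧
      (1 - ε) * sval A 1 ≤
        vnorm (Aᵀ *ᵥ ((vnorm (((A * Aᵀ) ^ t) *ᵥ y))⁻¹ • (((A * Aᵀ) ^ t) *ᵥ y))) := by
  refine ⟨1, one_pos, fun n A u₁ y ε t hσ hu₁ hAu₁ hy hyu₁ ⟨hε₀, hε₁⟩ ht => ?_⟩
  set σ := sval A 1
  set B := A * Aᵀ
  have hB : B.IsSymm := isSymm_mul_transpose_self A
  have hn : (0 : ℝ) < n := Nat.cast_pos.2 (pos_of_sval_one_pos hσ)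
  have hyu₁_sq : (n : ℝ)⁻¹ ≤ (y ⬝ᵥ u₁) ^ 2 := by
    simpa [div_pow, Real.sq_sqrt hn.le] using pow_le_pow_left₀ (by positivity) hyu₁ 2
  have hyu₁_ne : y ⬝ᵥ u₁ ≠ 0 := fun h =>
    (inv_pos.2 hn).not_ge (hyu₁_sq.trans_eq (by simp [h]))
  have hε_pow : ((1 - ε) ^ 2) ^ (t + 1) ≤ (y ⬝ᵥ u₁) ^ 2 :=
    calc ((1 - ε) ^ 2) ^ (t + 1) = (1 - ε) ^ (2 * (t + 1)) := (pow_mul _ _ _).symm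
      _ ≤ (1 - ε) ^ t := pow_le_pow_of_le_one (by linarith) (by linarith) (by omega)
      _ ≤ (n : ℝ)⁻¹ := one_sub_pow_le_inv_of_log_div_le hn hε₀ hε₁.le (by simpa using ht)
      _ ≤ (y ⬝ᵥ u₁) ^ 2 := hyu₁_sq
  have hσ₂ : σ ^ 2 ≠ 0 := pow_ne_zero 2 hσ.ne'
  have hw := hB.pow_mulVec_ne_zero hAu₁ hσ₂ hyu₁_ne t
  have hgap := hB.mul_dotProduct_self_pow_mulVec_le hAu₁
    (dotProduct_self_eq_one_of_vnorm_eq_one hu₁) hσ₂ (dotProduct_self_eq_one_of_vnorm_eq_one hy)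
    hyu₁_ne (sq_nonneg (1 - ε)) hε_pow
  refine ⟨hw, le_vnorm_mulVec_inv_smul Aᵀ hw (mul_nonneg (by linarith) hσ.le) ?_⟩
  have hiter : B ^ (t + 1) *ᵥ y = A *ᵥ (Aᵀ *ᵥ (B ^ t *ᵥ y)) := by
    rw [pow_succ_mulVec]
    exact (mulVec_mulVec _ _ _).symm
  have hstep := mulVec_dotProduct_self_le A (Aᵀ *ᵥ (B ^ t *ᵥ y))
  rw [← hiter] at hstep
  refine le_of_mul_le_mul_left ?_ (pow_pos hσ 2)
  linear_combination hgap + hstep
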